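/- arXiv:2002.00604 — 4 statements merged into one kernel-verified Lean document; each statement's English description precedes it below -/
import Mathlib

section
/- Let E and F be finite-dimensional vector spaces over ℂ, each equipped with decreasing ℤ-indexed filtrations E(j) and F(j) (i.e., E(j+1) ⊆ E(j) and F(j+1) ⊆ F(j)) such that E(j) = E and F(j) = F for j sufficiently small, and E(j) = 0, F(j) = 0 for j sufficiently large. Define the filtration on E ⊗ F by (E⊗F)(j) = ∑_{j₁+j₂=j} E(j₁) ⊗ F(j₂) (span of images in E ⊗ F). Then for subspaces V ⊆ E and W ⊆ F, setting a = max{j : V ⊆ E(j)}, b = max{j : W ⊆ F(j)}, and c = max{j : V ⊗ W ⊆ (E⊗F)(j)}, one has c = a + b. -/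
open TensorProduct

/-- Span of elementary tensors `a ⊗ b` with `a ∈ A`, `b ∈ B`, inside `V ⊗ W`. -/
noncomputable def tensorSpan {V W : Type*} [AddCommGroup V] [Module ℂ V]
    [AddCommGroup W] [Module ℂ W] (A : Submodule ℂ V) (B : Submodule ℂ W) :
    Submodule ℂ (V ⊗[ℂ] W) :=
  Submodule.span ℂ {x | ∃ a ∈ A, ∃ b ∈ B, x = a ⊗ₜ[ℂ] b}

/-- The induced filtration on the tensor product:
`(E ⊗ F)(j) = ∑_{j₁+j₂=j} E(j₁) ⊗ F(j₂)`. -/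
noncomputable def tensorFil {V W : Type*} [AddCommGroup V] [Module ℂ V]
    [AddCommGroup W] [Module ℂ W] (FE : ℤ → Submodule ℂ V) (FF : ℤ → Submodule ℂ W)
    (j : ℤ) : Submodule ℂ (V ⊗[ℂ] W) :=
  ⨆ p : {p : ℤ × ℤ // p.1 + p.2 = j}, tensorSpan (FE p.1.1) (FF p.1.2)

lemma tensorSpan_mono {V W : Type*} [AddCommGroup V] [Module ℂ V]
    [AddCommGroup W] [Module ℂ W] {A A' : Submodule ℂ V} {B B' : Submodule ℂ W}
    (hA : A ≤ A') (hB : B ≤ B') : tensorSpan A B ≤ tensorSpan A' B' := by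
  apply Submodule.span_mono
  rintro x ⟨u, hu, w, hw, rfl⟩
  exact ⟨u, hA hu, w, hB hw, rfl⟩

lemma fil_antitone {V : Type*} [AddCommGroup V] [Module ℂ V]
    (FE : ℤ → Submodule ℂ V) (hdec : ∀ j : ℤ, FE (j + 1) ≤ FE j)
    {m n : ℤ} (h : m ≤ n) : FE n ≤ FE m := by
  have key : ∀ k : ℕ, FE (m + k) ≤ FE m := by
    intro k
    induction k with
    | zero => simp
    | succ k ih =>
        have h2 : FE (m + k + 1) ≤ FE (m + k) := hdec (m + k)
        have h3 : (m + (k + 1 : ℕ) : ℤ) = m + k + 1 := by push_cast; ring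
        exact h3 ▸ h2.trans ih
  obtain ⟨k, hk⟩ : ∃ k : ℕ, n = m + k := ⟨(n - m).toNat, by omega⟩
  exact hk ▸ key k

lemma tensorFil_antitone {V W : Type*} [AddCommGroup V] [Module ℂ V]
    [AddCommGroup W] [Module ℂ W] (FE : ℤ → Submodule ℂ V) (FF : ℤ → Submodule ℂ W)
    (hEdec : ∀ j : ℤ, FE (j + 1) ≤ FE j) {j k : ℤ} (h : j ≤ k) :
    tensorFil FE FF k ≤ tensorFil FE FF j := by
  apply iSup_le
  rintro ⟨⟨p1, p2⟩, hp⟩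
  have : tensorSpan (FE p1) (FF p2) ≤ tensorSpan (FE (p1 - (k - j))) (FF p2) :=
    tensorSpan_mono (fil_antitone FE hEdec (by omega)) le_rfl
  exact this.trans (le_iSup (fun p : {p : ℤ × ℤ // p.1 + p.2 = j} =>
    tensorSpan (FE p.1.1) (FF p.1.2)) ⟨(p1 - (k - j), p2), by omega⟩)

lemma exists_functional {V : Type*} [AddCommGroup V] [Module ℂ V]
    (A : Submodule ℂ V) {v : V} (hv : v ∉ A) :
    ∃ φ : V →ₗ[ℂ] ℂ, φ v ≠ 0 ∧ ∀ x ∈ A, φ x = 0 := by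
  have hq : A.mkQ v ≠ 0 := by
    simpa [Submodule.Quotient.mk_eq_zero] using hv
  obtain ⟨f, hf⟩ : ∃ f : (V ⧸ A) →ₗ[ℂ] ℂ, f (A.mkQ v) ≠ 0 := by
    by_contra h
    push_neg at h
    exact hq ((Module.forall_dual_apply_eq_zero_iff ℂ _).mp h)
  exact ⟨f ∘ₗ A.mkQ, hf, fun x hx => by
    simp [Submodule.mkQ_apply, (Submodule.Quotient.mk_eq_zero A).mpr hx]⟩

theorem stmt0' {V W : Type*} [AddCommGroup V] [Module ℂ V] [FiniteDimensional ℂ V]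
    [AddCommGroup W] [Module ℂ W] [FiniteDimensional ℂ W]
    (FE : ℤ → Submodule ℂ V) (FF : ℤ → Submodule ℂ W)
    (hEdec : ∀ j : ℤ, FE (j + 1) ≤ FE j) (hFdec : ∀ j : ℤ, FF (j + 1) ≤ FF j)
    (SV : Submodule ℂ V) (SW : Submodule ℂ W)
    (a b c : ℤ)
    (ha : SV ≤ FE a ∧ ¬ SV ≤ FE (a + 1))
    (hb : SW ≤ FF b ∧ ¬ SW ≤ FF (b + 1))
    (hc : tensorSpan SV SW ≤ tensorFil FE FF c ∧
      ¬ tensorSpan SV SW ≤ tensorFil FE FF (c + 1)) :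
    c = a + b := by
  -- upper bound inclusion
  have hup : tensorSpan SV SW ≤ tensorFil FE FF (a + b) := by
    have h1 : tensorSpan SV SW ≤ tensorSpan (FE a) (FF b) := tensorSpan_mono ha.1 hb.1
    exact h1.trans (le_iSup (fun p : {p : ℤ × ℤ // p.1 + p.2 = a + b} =>
      tensorSpan (FE p.1.1) (FF p.1.2)) ⟨(a, b), rfl⟩)
  -- construct a separating functional
  obtain ⟨v, hvS, hv⟩ := SetLike.not_le_iff_exists.mp ha.2
  obtain ⟨w, hwS, hw⟩ := SetLike.not_le_iff_exists.mp hb.2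
  obtain ⟨φ, hφv, hφ⟩ := exists_functional (FE (a + 1)) hv
  obtain ⟨ψ, hψw, hψ⟩ := exists_functional (FF (b + 1)) hw
  set g : V ⊗[ℂ] W →ₗ[ℂ] ℂ :=
    (TensorProduct.lid ℂ ℂ).toLinearMap ∘ₗ TensorProduct.map φ ψ with hg
  have hgtmul : ∀ (x : V) (y : W), g (x ⊗ₜ[ℂ] y) = φ x * ψ y := by
    intro x y
    simp [hg, TensorProduct.map_tmul, smul_eq_mul]
  have hker : tensorFil FE FF (a + b + 1) ≤ LinearMap.ker g := by
    apply iSup_le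
    rintro ⟨⟨p1, p2⟩, hp⟩
    dsimp only at hp ⊢
    rw [tensorSpan, Submodule.span_le]
    rintro x ⟨u, hu, y, hy, rfl⟩
    simp only [SetLike.mem_coe, LinearMap.mem_ker, hgtmul]
    rcases le_or_gt (a + 1) p1 with h1 | h1
    · rw [hφ u (fil_antitone FE hEdec h1 hu), zero_mul]
    · rw [hψ y (fil_antitone FF hFdec (by omega) hy), mul_zero]
  have hdown : ¬ tensorSpan SV SW ≤ tensorFil FE FF (a + b + 1) := by
    intro hle
    have : v ⊗ₜ[ℂ] w ∈ tensorSpan SV SW :=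
      Submodule.subset_span ⟨v, hvS, w, hwS, rfl⟩
    have := hker (hle this)
    rw [LinearMap.mem_ker, hgtmul] at this
    exact (mul_ne_zero hφv hψw) this
  -- conclude
  have h1 : a + b ≤ c := by
    by_contra h
    exact hc.2 (hup.trans (tensorFil_antitone FE FF hEdec (by omega)))
  have h2 : c ≤ a + b := by
    by_contra h
    exact hdown (hc.1.trans (tensorFil_antitone FE FF hEdec (by omega)))
  omega


theorem stmt0 {V W : Type*} [AddCommGroup V] [Module ℂ V] [FiniteDimensional ℂ V]
    [AddCommGroup W] [Module ℂ W] [FiniteDimensional ℂ W]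
    (FE : ℤ → Submodule ℂ V) (FF : ℤ → Submodule ℂ W)
    (hEdec : ∀ j : ℤ, FE (j + 1) ≤ FE j) (hFdec : ∀ j : ℤ, FF (j + 1) ≤ FF j)
    (hEexh : ∃ j₀ : ℤ, ∀ j ≤ j₀, FE j = ⊤) (hFexh : ∃ j₀ : ℤ, ∀ j ≤ j₀, FF j = ⊤)
    (hEsep : ∃ j₁ : ℤ, ∀ j ≥ j₁, FE j = ⊥) (hFsep : ∃ j₁ : ℤ, ∀ j ≥ j₁, FF j = ⊥)
    (SV : Submodule ℂ V) (SW : Submodule ℂ W) (hSV : SV ≠ ⊥) (hSW : SW ≠ ⊥)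
    (a b c : ℤ)
    -- `a = max{j : V ⊆ E(j)}`
    (ha : SV ≤ FE a ∧ ¬ SV ≤ FE (a + 1))
    -- `b = max{j : W ⊆ F(j)}`
    (hb : SW ≤ FF b ∧ ¬ SW ≤ FF (b + 1))
    -- `c = max{j : V ⊗ W ⊆ (E ⊗ F)(j)}`
    (hc : tensorSpan SV SW ≤ tensorFil FE FF c ∧
      ¬ tensorSpan SV SW ≤ tensorFil FE FF (c + 1)) :
    c = a + b := by
  exact stmt0' FE FF hEdec hFdec SV SW a b c ha hb hc
end

section
/- Let k be a positive integer and let E = ℂ² with a rank-2 Klyachko-type filtration on a single ray: E(j) = E for j ≤ a, E(j) = ℂv for a < j ≤ b, and E(j) = 0 for j > b, where v ∈ E is nonzero and a < b. Then the induced filtration on S^k E, defined by (S^k E)(j) = ∑_{j₁+⋯+j_k = j} image of E(j₁)⊗⋯⊗E(j_k) in S^k E, satisfies: (S^k E)(j) = S^k E for j ≤ ka; (S^k E)(j) = v^l · S^{k−l} E for (k−l+1)a + (l−1)b < j ≤ (k−l)a + lb (for 1 ≤ l ≤ k); and (S^k E)(j) = 0 for j > kb. -/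
/-- The linear polynomial on `ℂ²` associated to a vector `w`. This identifies
`E = ℂ²` with the degree-one part of `ℂ[x₀,x₁]`, and `S^k E` with products of
`k` linear forms. -/
noncomputable def lin2 (w : Fin 2 → ℂ) : MvPolynomial (Fin 2) ℂ :=
  ∑ i, MvPolynomial.C (w i) * MvPolynomial.X i

/-- The rank-2 Klyachko filtration on a single ray: `E` for `j ≤ a`, `ℂv` for
`a < j ≤ b`, `0` for `j > b`. -/
noncomputable def filE2 (v : Fin 2 → ℂ) (a b : ℤ) (j : ℤ) : Submodule ℂ (Fin 2 → ℂ) :=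
  if j ≤ a then ⊤ else if j ≤ b then Submodule.span ℂ {v} else ⊥

/-- The induced filtration on `S^k E`:
`(S^k E)(j) = ∑_{j₁+⋯+j_k=j} image of E(j₁)⊗⋯⊗E(j_k)`, realized as spans of
products of `k` linear forms. -/
noncomputable def symFil2 (k : ℕ) (v : Fin 2 → ℂ) (a b : ℤ) (j : ℤ) :
    Submodule ℂ (MvPolynomial (Fin 2) ℂ) :=
  ⨆ js : {js : Fin k → ℤ // ∑ i, js i = j},
    Submodule.span ℂ {p | ∃ w : Fin k → (Fin 2 → ℂ),
      (∀ i, w i ∈ filE2 v a b (js.1 i)) ∧ p = ∏ i, lin2 (w i)}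

/-- `v^l · S^{k-l} E`: the span of symmetric products `v^l w₁⋯w_{k-l}`. -/
noncomputable def vPowSym (k l : ℕ) (v : Fin 2 → ℂ) :
    Submodule ℂ (MvPolynomial (Fin 2) ℂ) :=
  Submodule.span ℂ
    {p | ∃ w : Fin (k - l) → (Fin 2 → ℂ), p = lin2 v ^ l * ∏ i, lin2 (w i)}

lemma lin2_zero : lin2 (0 : Fin 2 → ℂ) = 0 := by simp [lin2]

lemma lin2_smul (c : ℂ) (v : Fin 2 → ℂ) :
    lin2 (c • v) = MvPolynomial.C c * lin2 v := by
  simp [lin2, Finset.mul_sum, map_mul, mul_assoc]; ring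

lemma prodP {ι : Type*} (v0 : Fin 2 → ℂ) (m n : ℕ) (s : Finset ι)
    (u : ι → (Fin 2 → ℂ)) (h : m + s.card = n) :
    ∃ w : Fin n → (Fin 2 → ℂ),
      (∀ i : Fin n, (i : ℕ) < m → w i = v0) ∧
      ∏ i, lin2 (w i) = lin2 v0 ^ m * ∏ i ∈ s, lin2 (u i) := by
  subst h
  classical
  set e : Fin s.card ≃ s := s.equivFin.symm with he
  refine ⟨fun i => if h : (i : ℕ) < m then v0 else u (e ⟨(i : ℕ) - m, by omega⟩), ?_, ?_⟩
  · intro i hi; simp [hi]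
  · rw [Fin.prod_univ_add]
    congr 1
    · have h0 : ∀ i : Fin m,
          lin2 (if h : ((Fin.castAdd s.card i : Fin (m + s.card)) : ℕ) < m then v0
            else u (e ⟨((Fin.castAdd s.card i : Fin (m + s.card)) : ℕ) - m, by omega⟩))
          = lin2 v0 := by
        intro i
        have : ((Fin.castAdd s.card i : Fin (m + s.card)) : ℕ) < m := by simpa using i.isLt
        rw [dif_pos this]
      rw [Finset.prod_congr rfl (fun i _ => h0 i), Finset.prod_const, Finset.card_univ,
        Fintype.card_fin]
    · have h1 : ∀ i : Fin s.card,
          lin2 (if h : ((Fin.natAdd m i : Fin (m + s.card)) : ℕ) < m then v0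
            else u (e ⟨((Fin.natAdd m i : Fin (m + s.card)) : ℕ) - m, by omega⟩))
          = lin2 (u (e i)) := by
        intro i
        have h2 : ¬ ((Fin.natAdd m i : Fin (m + s.card)) : ℕ) < m := by simp
        rw [dif_neg h2]
        congr 1
        ext : 1
        simp
      rw [Finset.prod_congr rfl (fun i _ => h1 i),
        Equiv.prod_comp e (fun x : s => lin2 (u x))]
      exact Finset.prod_coe_sort s fun x => lin2 (u x)

theorem stmt4 (k : ℕ) (hk : 1 ≤ k) (v : Fin 2 → ℂ) (hv : v ≠ 0)
    (a b : ℤ) (hab : a < b) :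
    (∀ j : ℤ, j ≤ (k : ℤ) * a → symFil2 k v a b j = vPowSym k 0 v) ∧
    (∀ l : ℕ, 1 ≤ l → l ≤ k → ∀ j : ℤ,
      ((k : ℤ) - l + 1) * a + ((l : ℤ) - 1) * b < j →
      j ≤ ((k : ℤ) - l) * a + (l : ℤ) * b →
      symFil2 k v a b j = vPowSym k l v) ∧
    (∀ j : ℤ, (k : ℤ) * b < j → symFil2 k v a b j = ⊥) := by
  classical
  haveI : NeZero k := ⟨by omega⟩
  refine ⟨?_, ?_, ?_⟩
  · -- Part 1 : j ≤ k*a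
    intro j hj
    apply le_antisymm
    · rw [symFil2]
      apply iSup_le
      rintro ⟨js, hjs⟩
      rw [Submodule.span_le]
      rintro p ⟨w, hw, rfl⟩
      exact Submodule.subset_span ⟨w, by simp⟩
    · rw [vPowSym, Submodule.span_le]
      rintro p ⟨w, rfl⟩
      have hsum : ∑ i : Fin k, (a + (if i = (0 : Fin k) then j - k * a else 0)) = j := by
        rw [Finset.sum_add_distrib, Finset.sum_const,
          Finset.sum_ite_eq' Finset.univ (0 : Fin k)]
        simp [nsmul_eq_mul]
      refine Submodule.mem_iSup_of_mem ⟨_, hsum⟩ (Submodule.subset_span ⟨w, ?_, by simp⟩)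
      intro i
      show w i ∈ filE2 v a b (a + (if i = (0 : Fin k) then j - k * a else 0))
      rw [filE2, if_pos]
      · trivial
      · split_ifs with h
        · linarith
        · simp
  · -- Part 2
    intro l hl1 hlk j hj1 hj2
    apply le_antisymm
    · rw [symFil2]
      apply iSup_le
      intro js
      have hjs := js.2
      rw [Submodule.span_le]
      rintro p ⟨w, hw, rfl⟩
      by_cases hex : ∃ i, b < js.1 i
      · obtain ⟨i, hi⟩ := hex
        have hwi : w i = 0 := by
          have := hw i
          rw [filE2, if_neg (by omega), if_neg (by omega)] at this
          simpa using this
        have : ∏ i, lin2 (w i) = 0 :=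
          Finset.prod_eq_zero (Finset.mem_univ i) (by rw [hwi, lin2_zero])
        rw [this]; exact Submodule.zero_mem _
      · push_neg at hex
        set S : Finset (Fin k) := Finset.univ.filter (fun i => a < js.1 i) with hS
        have hcard2 : (Finset.univ.filter (fun i => ¬ a < js.1 i)).card = k - S.card := by
          have h := Finset.card_filter_add_card_filter_not
            (s := (Finset.univ : Finset (Fin k))) (p := fun i => a < js.1 i)
          simp only [Finset.card_univ, Fintype.card_fin] at h
          rw [← hS] at h
          omega
        have hcardle : S.card ≤ k := by
          have := Finset.card_filter_le (Finset.univ : Finset (Fin k)) (fun i => a < js.1 i)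
          simpa using this
        have hsum1 : ∑ i ∈ S, js.1 i ≤ (S.card : ℤ) * b := by
          calc ∑ i ∈ S, js.1 i ≤ ∑ _i ∈ S, b := Finset.sum_le_sum fun i _ => hex i
          _ = (S.card : ℤ) * b := by rw [Finset.sum_const, nsmul_eq_mul]
        have hsum2 : ∑ i ∈ Finset.univ.filter (fun i => ¬ a < js.1 i), js.1 i
            ≤ ((k : ℤ) - S.card) * a := by
          calc ∑ i ∈ Finset.univ.filter (fun i => ¬ a < js.1 i), js.1 i
              ≤ ∑ _i ∈ Finset.univ.filter (fun i => ¬ a < js.1 i), a :=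
                Finset.sum_le_sum fun i hi => by
                  have := (Finset.mem_filter.mp hi).2; linarith
          _ = ((k : ℤ) - S.card) * a := by
                rw [Finset.sum_const, hcard2, nsmul_eq_mul]
                push_cast [Nat.cast_sub hcardle]
                ring
        have hjle : j ≤ (S.card : ℤ) * b + ((k : ℤ) - S.card) * a := by
          have := Finset.sum_filter_add_sum_filter_not Finset.univ (fun i => a < js.1 i) js.1
          rw [hjs] at this
          linarith [this]
        have hlS : l ≤ S.card := by
          by_contra hcon
          push_neg at hcon
          have h1 : (S.card : ℤ) - l + 1 ≤ 0 := by omega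
          have key : ((S.card : ℤ) - l + 1) * (b - a) ≤ 0 :=
            mul_nonpos_of_nonpos_of_nonneg h1 (by linarith)
          nlinarith [key]
        have hc : ∀ i : Fin k, ∃ ci : ℂ, i ∈ S → w i = ci • v := by
          intro i
          by_cases hiS : i ∈ S
          · have hia : a < js.1 i := (Finset.mem_filter.mp hiS).2
            have := hw i
            rw [filE2, if_neg (by omega), if_pos (hex i)] at this
            obtain ⟨ci, hci⟩ := Submodule.mem_span_singleton.mp this
            exact ⟨ci, fun _ => hci.symm⟩
          · exact ⟨0, fun h => absurd h hiS⟩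
        choose c hc using hc
        obtain ⟨w2, -, hw2⟩ := prodP v (S.card - l) (k - l)
          (Finset.univ.filter (fun i => ¬ a < js.1 i)) w (by omega)
        have key : ∏ i, lin2 (w i)
            = (∏ i ∈ S, c i) • (lin2 v ^ l * ∏ i, lin2 (w2 i)) := by
          rw [hw2, ← Finset.prod_filter_mul_prod_filter_not Finset.univ
            (fun i => a < js.1 i) (fun i => lin2 (w i))]
          rw [Finset.prod_congr rfl (fun i hi => by rw [hc i hi, lin2_smul] :
            ∀ i ∈ S, lin2 (w i) = MvPolynomial.C (c i) * lin2 v)]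
          rw [Finset.prod_mul_distrib, Finset.prod_const, ← map_prod,
            MvPolynomial.smul_eq_C_mul]
          have hpow : lin2 v ^ S.card = lin2 v ^ l * lin2 v ^ (S.card - l) := by
            rw [← pow_add]; congr 1; omega
          rw [hpow]; ring
        rw [key]
        exact Submodule.smul_mem _ _ (Submodule.subset_span ⟨w2, rfl⟩)
    · rw [vPowSym, Submodule.span_le]
      rintro p ⟨w, rfl⟩
      set δ : ℤ := j - (((k : ℤ) - l) * a + l * b) with hδ
      have hsum : ∑ i : Fin k,
          ((if (i : ℕ) < l then b else a) + (if (i : ℕ) = l - 1 then δ else 0)) = j := by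
        rw [Finset.sum_add_distrib]
        have e1 : ∑ i : Fin k, (if (i : ℕ) < l then b else a)
            = (l : ℤ) * b + ((k : ℤ) - l) * a := by
          rw [Fin.sum_univ_eq_sum_range (fun n => if n < l then b else a) k]
          rw [Finset.range_eq_Ico, ← Finset.sum_Ico_consecutive _ (Nat.zero_le l) hlk]
          rw [Finset.sum_congr rfl (fun i hi => if_pos (Finset.mem_Ico.mp hi).2),
            Finset.sum_congr (rfl : Finset.Ico l k = Finset.Ico l k)
              (fun i hi => if_neg (by have := (Finset.mem_Ico.mp hi).1; omega)),
            Finset.sum_const, Finset.sum_const, Nat.card_Ico, Nat.card_Ico,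
            nsmul_eq_mul, nsmul_eq_mul]
          push_cast [Nat.cast_sub hlk, Nat.sub_zero]
          ring
        have e2 : ∑ i : Fin k, (if (i : ℕ) = l - 1 then δ else 0) = δ := by
          rw [Fin.sum_univ_eq_sum_range (fun n => if n = l - 1 then δ else 0) k,
            Finset.sum_ite_eq' (Finset.range k) (l - 1)]
          rw [if_pos (Finset.mem_range.mpr (by omega))]
        rw [e1, e2, hδ]; ring
      obtain ⟨w', hw'v, hw'prod⟩ := prodP v l k (Finset.univ : Finset (Fin (k - l))) w
        (by simp; omega)
      refine Submodule.mem_iSup_of_mem ⟨_, hsum⟩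
        (Submodule.subset_span ⟨w', ?_, hw'prod.symm⟩)
      intro i
      show w' i ∈ filE2 v a b
        ((if (i : ℕ) < l then b else a) + (if (i : ℕ) = l - 1 then δ else 0))
      by_cases hil : (i : ℕ) < l
      · rw [hw'v i hil]
        by_cases hie : (i : ℕ) = l - 1
        · rw [if_pos hil, if_pos hie, filE2, if_neg (by rw [hδ]; nlinarith),
            if_pos (by rw [hδ]; nlinarith)]
          exact Submodule.mem_span_singleton_self v
        · rw [if_pos hil, if_neg hie, filE2, if_neg (by linarith), if_pos (by linarith)]
          exact Submodule.mem_span_singleton_self v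
      · have hie : ¬ (i : ℕ) = l - 1 := by omega
        rw [if_neg hil, if_neg hie, filE2, if_pos (by linarith)]
        trivial
  · -- Part 3
    intro j hj
    rw [symFil2, iSup_eq_bot]
    intro js
    have hjs := js.2
    rw [Submodule.span_eq_bot]
    rintro p ⟨w, hw, rfl⟩
    have hex : ∃ i, b < js.1 i := by
      by_contra hcon
      push_neg at hcon
      have : ∑ i : Fin k, js.1 i ≤ (k : ℤ) * b := by
        calc ∑ i : Fin k, js.1 i ≤ ∑ _i : Fin k, b := Finset.sum_le_sum fun i _ => hcon i
        _ = (k : ℤ) * b := by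
          rw [Finset.sum_const, Finset.card_univ, Fintype.card_fin, nsmul_eq_mul]
      rw [hjs] at this
      linarith
    obtain ⟨i, hi⟩ := hex
    have hwi : w i = 0 := by
      have := hw i
      rw [filE2, if_neg (by omega), if_neg (by omega)] at this
      simpa using this
    exact Finset.prod_eq_zero (Finset.mem_univ i) (by rw [hwi, lin2_zero])
end

section
/- Let E = ℂ³ and fix pairwise linearly independent nonzero vectors v₀, v₁, v₂ ∈ E and 2-dimensional subspaces W₀, W₁, W₂ with v_i ∈ W_i, all in general position (any two of the W_i intersect in a line, v_i ∉ W_j for i ≠ j, and the three lines W_i ∩ W_j are distinct from each other and from the lines ℂv_i). Define three filtrations on E: for i = 1,2, E^i(j) = E for j ≤ −1, W_i for j = 0, ℂv_i for j = 1, 0 for j > 1; and E⁰(j) = E for j ≤ 0, W₀ for j = 1, ℂv₀ for j = 2, 0 for j > 2. Equip S²E with the induced symmetric-power filtrations (S²E)^ρ(j) = ∑_{j₁+j₂=j} image of E^ρ(j₁) ⊗ E^ρ(j₂). Then the intersection (S²E)⁰(1) ∩ (S²E)¹(0) ∩ (S²E)²(0) is one-dimensional. -/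
/-- The linear polynomial on `ℂ³` associated to a vector `w`, identifying
`E = ℂ³` with linear forms and `S²E` with products of two linear forms. -/
noncomputable def lin3 (w : Fin 3 → ℂ) : MvPolynomial (Fin 3) ℂ :=
  ∑ i, MvPolynomial.C (w i) * MvPolynomial.X i

/-- The basis vectors `v₀, v₁, v₂` of `ℂ³`. -/
noncomputable def vv (i : Fin 3) : Fin 3 → ℂ := Pi.single i 1

/-- The general-position planes `W₀, W₁, W₂` with `vᵢ ∈ Wᵢ`. -/
noncomputable def WW : Fin 3 → Submodule ℂ (Fin 3 → ℂ) :=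
  ![Submodule.span ℂ {vv 0, vv 1 + vv 2},
    Submodule.span ℂ {vv 1, vv 2 + vv 0},
    Submodule.span ℂ {vv 2, vv 0 + vv 1}]

/-- The three Klyachko filtrations on `E = ℂ³`. -/
noncomputable def EFil3 : Fin 3 → ℤ → Submodule ℂ (Fin 3 → ℂ) :=
  ![fun j => if j ≤ 0 then ⊤ else if j = 1 then WW 0
      else if j = 2 then Submodule.span ℂ {vv 0} else ⊥,
    fun j => if j ≤ -1 then ⊤ else if j = 0 then WW 1
      else if j = 1 then Submodule.span ℂ {vv 1} else ⊥,
    fun j => if j ≤ -1 then ⊤ else if j = 0 then WW 2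
      else if j = 1 then Submodule.span ℂ {vv 2} else ⊥]

/-- The induced filtration on `S²E`:
`(S²E)^ρ(j) = ∑_{j₁+j₂=j} E^ρ(j₁)·E^ρ(j₂)`. -/
noncomputable def S2Fil (ρ : Fin 3) (j : ℤ) : Submodule ℂ (MvPolynomial (Fin 3) ℂ) :=
  ⨆ p : {p : ℤ × ℤ // p.1 + p.2 = j},
    Submodule.span ℂ
      {q | ∃ x ∈ EFil3 ρ p.1.1, ∃ y ∈ EFil3 ρ p.1.2, q = lin3 x * lin3 y}

/-!
Every generator of `(S²E)^ρ(j)` is a product of two linear forms, so it can be tested by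
evaluation at points of `ℂ³`. For `ρ = 0` one factor lies in `W₀` and vanishes at `v₁ - v₂`.
For `ρ = 1, 2` either both factors lie in `W_ρ` or one is a multiple of `v_ρ`; writing
`a, b` for the other two indices, both kinds of product `q` satisfy `q(v_a - v_b) = 0` and
`q(v_a) = q(v_b)`. These five linear conditions cut the six-dimensional space of quadratic
forms down to the line through `(x₀ + x₁ + x₂)²`, and this square does lie in the
intersection because `v₀ + v₁ + v₂` lies in every `W_i`.
-/

open MvPolynomial

lemma aeval_lin3 (a w : Fin 3 → ℂ) : aeval a (lin3 w) = w ⬝ᵥ a := by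
  simp [lin3, dotProduct]

lemma lin3_mul_mem_S2Fil {ρ : Fin 3} {i k j : ℤ} (hik : i + k = j) {x y : Fin 3 → ℂ}
    (hx : x ∈ EFil3 ρ i) (hy : y ∈ EFil3 ρ k) : lin3 x * lin3 y ∈ S2Fil ρ j :=
  Submodule.mem_iSup_of_mem ⟨(i, k), hik⟩ (Submodule.subset_span ⟨x, hx, y, hy, rfl⟩)

lemma S2Fil_le_iff {ρ : Fin 3} {j : ℤ} {N : Submodule ℂ (MvPolynomial (Fin 3) ℂ)} :
    S2Fil ρ j ≤ N ↔ ∀ i k, i + k = j →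
      ∀ x ∈ EFil3 ρ i, ∀ y ∈ EFil3 ρ k, lin3 x * lin3 y ∈ N := by
  refine ⟨fun h i k hik x hx y hy => h (lin3_mul_mem_S2Fil hik hx hy), fun h => ?_⟩
  refine iSup_le fun ⟨⟨i, k⟩, hik⟩ => Submodule.span_le.mpr ?_
  rintro _ ⟨x, hx, y, hy, rfl⟩
  exact h i k hik x hx y hy

lemma apply_eq_apply_of_mem_span_pair {ρ a b : Fin 3} (ha : a ≠ ρ) (hb : b ≠ ρ)
    {x : Fin 3 → ℂ} (hx : x ∈ Submodule.span ℂ {vv ρ, vv a + vv b}) : x a = x b := by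
  obtain ⟨s, t, rfl⟩ := Submodule.mem_span_pair.mp hx
  by_cases hab : a = b
  · rw [hab]
  · simp [vv, ha, hb, hab, Ne.symm hab]

lemma apply_eq_zero_of_mem_span_singleton {ρ a : Fin 3} (ha : a ≠ ρ)
    {x : Fin 3 → ℂ} (hx : x ∈ Submodule.span ℂ {vv ρ}) : x a = 0 := by
  obtain ⟨s, rfl⟩ := Submodule.mem_span_singleton.mp hx
  simp [vv, ha]

lemma span_vv_le_WW (ρ : Fin 3) : Submodule.span ℂ {vv ρ} ≤ WW ρ := by
  rw [Submodule.span_singleton_le_iff_mem]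
  fin_cases ρ <;> exact Submodule.subset_span (Set.mem_insert _ _)

lemma EFil3_zero_le_WW {j : ℤ} (hj : 1 ≤ j) : EFil3 0 j ≤ WW 0 := by
  simp only [EFil3, Matrix.cons_val_zero]
  split_ifs
  · omega
  · exact le_rfl
  · exact span_vv_le_WW 0
  · exact bot_le

lemma EFil3_le_WW {ρ : Fin 3} (hρ : ρ ≠ 0) {j : ℤ} (hj : 0 ≤ j) : EFil3 ρ j ≤ WW ρ := by
  fin_cases ρ
  · exact absurd rfl hρ
  all_goals
    simp only [EFil3, Fin.reduceFinMk, Matrix.cons_val]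
    split_ifs
    · omega
    · exact le_rfl
    · exact span_vv_le_WW _
    · exact bot_le

lemma EFil3_le_span_vv {ρ : Fin 3} (hρ : ρ ≠ 0) {j : ℤ} (hj : 1 ≤ j) :
    EFil3 ρ j ≤ Submodule.span ℂ {vv ρ} := by
  fin_cases ρ
  · exact absurd rfl hρ
  all_goals
    simp only [EFil3, Fin.reduceFinMk, Matrix.cons_val]
    split_ifs
    · omega
    · omega
    · exact le_rfl
    · exact bot_le

lemma one_mem_WW (ρ : Fin 3) : (1 : Fin 3 → ℂ) ∈ WW ρ := by
  fin_cases ρ <;>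
  · refine Submodule.mem_span_pair.mpr ⟨1, 1, ?_⟩
    ext i
    fin_cases i <;> simp [vv]

lemma aeval_eq_of_mem_S2Fil_zero_one {q : MvPolynomial (Fin 3) ℂ} (hq : q ∈ S2Fil 0 1) :
    aeval (vv 1 - vv 2) q = 0 := by
  suffices S2Fil 0 1 ≤ LinearMap.ker (aeval (vv 1 - vv 2)).toLinearMap from this hq
  refine S2Fil_le_iff.mpr fun i k hik x hx y hy => ?_
  have hW : ∀ {z : Fin 3 → ℂ}, z ∈ WW 0 → z ⬝ᵥ (vv 1 - vv 2) = 0 := fun hz => by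
    simp [dotProduct_sub, vv, apply_eq_apply_of_mem_span_pair (by decide) (by decide) hz]
  simp only [LinearMap.mem_ker, AlgHom.toLinearMap_apply, map_mul, aeval_lin3]
  rcases le_or_gt 1 i with hi | hi
  · rw [hW (EFil3_zero_le_WW hi hx), zero_mul]
  · rw [hW (EFil3_zero_le_WW (by omega) hy), mul_zero]

lemma aeval_eq_of_mem_S2Fil_zero {ρ a b : Fin 3} (hρ : ρ ≠ 0) (ha : a ≠ ρ) (hb : b ≠ ρ)
    (hW : WW ρ = Submodule.span ℂ {vv ρ, vv a + vv b}) {q : MvPolynomial (Fin 3) ℂ}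
    (hq : q ∈ S2Fil ρ 0) : aeval (vv a - vv b) q = 0 ∧ aeval (vv a) q = aeval (vv b) q := by
  suffices S2Fil ρ 0 ≤ LinearMap.ker (aeval (vv a - vv b)).toLinearMap ⊓
      LinearMap.eqLocus (aeval (vv a)).toLinearMap (aeval (vv b)).toLinearMap from this hq
  refine S2Fil_le_iff.mpr fun i k hik x hx y hy => ?_
  simp only [Submodule.mem_inf, LinearMap.mem_ker, LinearMap.mem_eqLocus,
    AlgHom.toLinearMap_apply, map_mul, aeval_lin3, dotProduct_sub, dotProduct_single, vv, mul_one]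
  rcases lt_trichotomy i 0 with hi | rfl | hi
  · have hy' := EFil3_le_span_vv hρ (by omega) hy
    simp [apply_eq_zero_of_mem_span_singleton ha hy', apply_eq_zero_of_mem_span_singleton hb hy']
  · obtain rfl : k = 0 := by omega
    have hx' := hW ▸ EFil3_le_WW hρ le_rfl hx
    have hy' := hW ▸ EFil3_le_WW hρ le_rfl hy
    simp [apply_eq_apply_of_mem_span_pair ha hb hx', apply_eq_apply_of_mem_span_pair ha hb hy']
  · have hx' := EFil3_le_span_vv hρ hi hx
    simp [apply_eq_zero_of_mem_span_singleton ha hx', apply_eq_zero_of_mem_span_singleton hb hx']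

noncomputable def quadSpan : Submodule ℂ (MvPolynomial (Fin 3) ℂ) :=
  Submodule.span ℂ (Set.range fun p : Fin 3 × Fin 3 => X p.1 * X p.2)

lemma lin3_mul_mem_quadSpan (x y : Fin 3 → ℂ) : lin3 x * lin3 y ∈ quadSpan := by
  have hxy : lin3 x * lin3 y = ∑ p : Fin 3 × Fin 3, (x p.1 * y p.2) • (X p.1 * X p.2) := by
    rw [lin3, lin3, Finset.sum_mul_sum, Fintype.sum_prod_type]
    refine Finset.sum_congr rfl fun i _ => Finset.sum_congr rfl fun j _ => ?_
    rw [smul_eq_C_mul, C_mul]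
    ring
  rw [hxy]
  exact Submodule.sum_mem _ fun p _ => Submodule.smul_mem _ _ (Submodule.subset_span ⟨p, rfl⟩)

lemma S2Fil_le_quadSpan (ρ : Fin 3) (j : ℤ) : S2Fil ρ j ≤ quadSpan :=
  S2Fil_le_iff.mpr fun _ _ _ x _ y _ => lin3_mul_mem_quadSpan x y

lemma mem_span_lin3_one_sq {q : MvPolynomial (Fin 3) ℂ} (hq : q ∈ quadSpan)
    (h12 : aeval (vv 1 - vv 2) q = 0) (h20 : aeval (vv 2 - vv 0) q = 0)
    (h01 : aeval (vv 0 - vv 1) q = 0) (h1 : aeval (vv 0) q = aeval (vv 1) q)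
    (h2 : aeval (vv 2) q = aeval (vv 0) q) :
    q ∈ Submodule.span ℂ {lin3 1 * lin3 1} := by
  obtain ⟨c, rfl⟩ := (Submodule.mem_span_range_iff_exists_fun ℂ).mp hq
  have e12 : c (1, 1) - c (1, 2) - c (2, 1) + c (2, 2) = 0 := by
    simpa [Fintype.sum_prod_type, Fin.sum_univ_three, vv, sub_eq_add_neg, add_assoc] using h12
  have e20 : c (0, 0) - c (0, 2) - c (2, 0) + c (2, 2) = 0 := by
    simpa [Fintype.sum_prod_type, Fin.sum_univ_three, vv, sub_eq_add_neg, add_assoc] using h20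
  have e01 : c (0, 0) - c (0, 1) - c (1, 0) + c (1, 1) = 0 := by
    simpa [Fintype.sum_prod_type, Fin.sum_univ_three, vv, sub_eq_add_neg, add_assoc] using h01
  have hc11 : c (1, 1) = c (0, 0) := by
    simpa [Fintype.sum_prod_type, Fin.sum_univ_three, vv] using h1.symm
  have hc22 : c (2, 2) = c (0, 0) := by
    simpa [Fintype.sum_prod_type, Fin.sum_univ_three, vv] using h2
  have hc01 : c (0, 1) + c (1, 0) = 2 * c (0, 0) := by linear_combination -e01 + hc11
  have hc12 : c (1, 2) + c (2, 1) = 2 * c (0, 0) := by linear_combination -e12 + hc11 + hc22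
  have hc20 : c (2, 0) + c (0, 2) = 2 * c (0, 0) := by linear_combination -e20 + hc22
  refine Submodule.mem_span_singleton.mpr ⟨c (0, 0), MvPolynomial.funext fun x => ?_⟩
  simp only [lin3, Pi.one_apply, C_1, one_mul, Fin.sum_univ_three, smul_eval, map_mul, map_add,
    eval_X, Fintype.sum_prod_type]
  linear_combination -(x 1 ^ 2 * hc11 + x 2 ^ 2 * hc22 + x 0 * x 1 * hc01 + x 1 * x 2 * hc12 +
    x 2 * x 0 * hc20)

lemma lin3_one_sq_mem : lin3 1 * lin3 1 ∈ S2Fil 0 1 ⊓ S2Fil 1 0 ⊓ S2Fil 2 0 := by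
  have hone : ∀ ρ : Fin 3, ρ ≠ 0 → (1 : Fin 3 → ℂ) ∈ EFil3 ρ 0 := by
    intro ρ hρ
    fin_cases ρ
    · exact absurd rfl hρ
    all_goals simpa [EFil3] using one_mem_WW _
  refine ⟨⟨lin3_mul_mem_S2Fil (i := 1) (k := 0) (add_zero 1) ?_ (by simp [EFil3]), ?_⟩, ?_⟩
  · simpa [EFil3] using one_mem_WW 0
  · exact lin3_mul_mem_S2Fil (add_zero 0) (hone 1 (by decide)) (hone 1 (by decide))
  · exact lin3_mul_mem_S2Fil (add_zero 0) (hone 2 (by decide)) (hone 2 (by decide))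

lemma lin3_one_ne_zero : lin3 1 ≠ 0 := fun h => by
  simpa [aeval_lin3, vv] using congrArg (aeval (vv 0)) h

/-- The intersection `(S²E)⁰(1) ∩ (S²E)¹(0) ∩ (S²E)²(0)` is one-dimensional. -/
theorem stmt12 :
    Module.finrank ℂ ((S2Fil 0 1 ⊓ S2Fil 1 0 ⊓ S2Fil 2 0) :
      Submodule ℂ (MvPolynomial (Fin 3) ℂ)) = 1 := by
  suffices h : S2Fil 0 1 ⊓ S2Fil 1 0 ⊓ S2Fil 2 0 = Submodule.span ℂ {lin3 1 * lin3 1} by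
    rw [h]
    exact finrank_span_singleton (mul_ne_zero lin3_one_ne_zero lin3_one_ne_zero)
  refine le_antisymm (fun q hq => ?_) ?_
  · obtain ⟨⟨hq0, hq1⟩, hq2⟩ := hq
    obtain ⟨h20, h2_eq_0⟩ :=
      aeval_eq_of_mem_S2Fil_zero (a := 2) (b := 0) (by decide) (by decide) (by decide) rfl hq1
    obtain ⟨h01, h0_eq_1⟩ :=
      aeval_eq_of_mem_S2Fil_zero (a := 0) (b := 1) (by decide) (by decide) (by decide) rfl hq2
    exact mem_span_lin3_one_sq (S2Fil_le_quadSpan 0 1 hq0)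
      (aeval_eq_of_mem_S2Fil_zero_one hq0) h20 h01 h0_eq_1 h2_eq_0
  · exact Submodule.span_le.mpr (Set.singleton_subset_iff.mpr lin3_one_sq_mem)
end

section
/- Let b₁,…,b₆ and a₁,…,a₆ be defined for a positive integer k ≥ 1 by: a₁=1, b₁=4; a₂=−2, b₂=6k−1; a₃=3k−6, b₃=12k−5; a₄=6k−5, b₄=6k−3; a₅=0, b₅=9k−3; a₆=6−6k, b₆=4. Then all twelve of the following inequalities hold: b₁+b₃−2b₂ > 0, a₁+a₃−2a₂ > 0, b₂+b₄−b₃ > 0, a₂+a₄−a₃ > 0, b₃+a₅−2b₄ > 0, a₃+b₅−2a₄ > 0, b₄+b₆ > 0, a₄+a₆ > 0, b₅+b₁ > 0, a₅+a₁ > 0, b₆+a₂−a₁ > 0, a₆+b₂−b₁ > 0; moreover the inequalities k·a₆ ≥ a₂−a₃+(k−1)(b₂−b₃) and k·a₅ ≥ a₃−2a₂+(k−1)(b₃−2b₂) both fail for every k ≥ 1, since a₂−a₃+(k−1)(b₂−b₃) − k·a₆ = k > 0 and a₃−2a₂+(k−1)(b₃−2b₂) − k·a₅ = 1 > 0. 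-/
/-- The arithmetic of the ample-but-not-globally-generated example: with
`a₁=1, b₁=4, a₂=−2, b₂=6k−1, a₃=3k−6, b₃=12k−5, a₄=6k−5, b₄=6k−3, a₅=0,
b₅=9k−3, a₆=6−6k, b₆=4`, the twelve ampleness inequalities hold for every
`k ≥ 1`, while both global-generation inequalities fail (their defects being
exactly `k` and `1`). -/
theorem stmt13 (k : ℤ) (hk : 1 ≤ k) :
    (4 + (12 * k - 5) - 2 * (6 * k - 1) > 0) ∧
    (1 + (3 * k - 6) - 2 * (-2) > 0) ∧
    ((6 * k - 1) + (6 * k - 3) - (12 * k - 5) > 0) ∧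
    ((-2) + (6 * k - 5) - (3 * k - 6) > 0) ∧
    ((12 * k - 5) + 0 - 2 * (6 * k - 3) > 0) ∧
    ((3 * k - 6) + (9 * k - 3) - 2 * (6 * k - 5) > 0) ∧
    ((6 * k - 3) + 4 > 0) ∧
    ((6 * k - 5) + (6 - 6 * k) > 0) ∧
    ((9 * k - 3) + 4 > 0) ∧
    (0 + 1 > 0) ∧
    (4 + (-2) - 1 > 0) ∧
    ((6 - 6 * k) + (6 * k - 1) - 4 > 0) ∧
    ¬ (k * (6 - 6 * k) ≥ (-2) - (3 * k - 6) + (k - 1) * ((6 * k - 1) - (12 * k - 5))) ∧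
    ¬ (k * 0 ≥ (3 * k - 6) - 2 * (-2) + (k - 1) * ((12 * k - 5) - 2 * (6 * k - 1))) ∧
    ((-2) - (3 * k - 6) + (k - 1) * ((6 * k - 1) - (12 * k - 5)) - k * (6 - 6 * k) = k) ∧
    ((3 * k - 6) - 2 * (-2) + (k - 1) * ((12 * k - 5) - 2 * (6 * k - 1)) - k * 0 = 1) := by
  constructor; · linarith
  constructor; · linarith
  constructor; · linarith
  constructor; · linarith
  constructor; · linarith
  constructor; · linarith
  constructor; · linarith
  constructor; · linarith
  constructor; · linarith
  constructor; · linarith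
  constructor; · linarith
  constructor; · linarith
  refine ⟨fun h => ?_, fun h => ?_, by ring, by ring⟩
  · nlinarith
  · nlinarith
end
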